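/- arXiv:1711.03627 — 2 statements merged into one kernel-verified Lean document; each statement's English description precedes it below -/
import Mathlib

section
/- Let (X⁺, T) be a transitive locally compact one-sided countable Markov shift and φ a λ-transient potential with summable variations. Fix an origin state o ∈ S and define the Martin kernel K(f, x | λ) = G(f, x | λ) / G(1_{[o]}, x | λ). Then for every non-zero f ∈ C_c⁺(X⁺) there exist constants 0 < c_f ≤ C_f such that c_f ≤ K(f, x | λ) ≤ C_f for all x ∈ X⁺. -/
open MeasureTheory ENNReal Filter Topology

variable {S : Type*}

/-- The one-sided topological Markov shift over alphabet `S` with transition relation `Adj`. -/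
abbrev MShift (Adj : S → S → Prop) : Type _ :=
  {x : ℕ → S // ∀ i, Adj (x i) (x (i + 1))}

/-- The left shift map. -/
def shiftMap (Adj : S → S → Prop) (x : MShift Adj) : MShift Adj :=
  ⟨fun i => x.1 (i + 1), fun i => x.2 (i + 1)⟩

/-- The Ruelle (transfer) operator on non-negative functions. -/
noncomputable def Ruelle (Adj : S → S → Prop) (φ : MShift Adj → ℝ)
    (f : MShift Adj → ℝ≥0∞) (x : MShift Adj) : ℝ≥0∞ :=
  ∑' y : {y : MShift Adj // shiftMap Adj y = x}, ENNReal.ofReal (Real.exp (φ y.1)) * f y.1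

/-- The Green's function `G(f, x | λ) = Σ_n λ⁻ⁿ (L_φⁿ f)(x)`. -/
noncomputable def Green (Adj : S → S → Prop) (φ : MShift Adj → ℝ) (lam : ℝ)
    (f : MShift Adj → ℝ≥0∞) (x : MShift Adj) : ℝ≥0∞ :=
  ∑' n : ℕ, ENNReal.ofReal ((lam ^ n)⁻¹) * ((Ruelle Adj φ)^[n] f) x

/-- The cylinder set `[a] = {x : x₀ = a}`. -/
def cylA (Adj : S → S → Prop) (a : S) : Set (MShift Adj) := {x | x.1 0 = a}

/-- Indicator function of the cylinder `[a]`. -/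
noncomputable def cylInd (Adj : S → S → Prop) (a : S) : MShift Adj → ℝ≥0∞ :=
  (cylA Adj a).indicator 1

/-- Topological transitivity: every state can be reached from every state. -/
def TransitiveShift (Adj : S → S → Prop) : Prop :=
  ∀ a b : S, ∃ (n : ℕ) (x : MShift Adj), x.1 0 = a ∧ ((shiftMap Adj)^[n] x).1 0 = b

/-- Local compactness: each state has finitely many followers. -/
def LocFin (Adj : S → S → Prop) : Prop := ∀ a : S, {b : S | Adj a b}.Finite

/-- Set of values `|φ(x) − φ(y)|` over pairs agreeing in their first `m` coordinates. -/
def varSet (Adj : S → S → Prop) (φ : MShift Adj → ℝ) (m : ℕ) : Set ℝ :=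
  {r | ∃ x y : MShift Adj, (∀ i < m, x.1 i = y.1 i) ∧ r = |φ x - φ y|}

/-- The `m`-th variation of `φ`. -/
noncomputable def Var (Adj : S → S → Prop) (φ : MShift Adj → ℝ) (m : ℕ) : ℝ :=
  sSup (varSet Adj φ m)

/-- `φ` has summable variations. -/
def SummableVar (Adj : S → S → Prop) (φ : MShift Adj → ℝ) : Prop :=
  (∀ m, BddAbove (varSet Adj φ m)) ∧ Summable (Var Adj φ)

/-- A non-negative real function viewed as `ℝ≥0∞`-valued. -/
noncomputable def ofR {Adj : S → S → Prop} (f : MShift Adj → ℝ) : MShift Adj → ℝ≥0∞ :=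
  fun x => ENNReal.ofReal (f x)

/-- `λ`-transience: the Green's function of every cylinder is finite everywhere. -/
def Transient (Adj : S → S → Prop) (φ : MShift Adj → ℝ) (lam : ℝ) : Prop :=
  ∀ (a : S) (x : MShift Adj), Green Adj φ lam (cylInd Adj a) x ≠ ⊤

/-!
Bounded distortion of Birkhoff sums gives a Harnack inequality: if `g ≥ ε` on a cylinder
`[x₀ … xₙ]`, then `L_φⁿ g ≥ δ ε` on `[xₙ]`, hence `G(g, ·) ≥ λ⁻ⁿ δ ε G(1_[xₙ], ·)`; by
transitivity every cylinder extends to one ending in any prescribed state. With `g = f`, which is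
positive on a cylinder by continuity, this bounds `K(f, ·)` from below. With `g = 1_[o]` it bounds
each `G(1_[a], ·)` by a multiple of `G(1_[o], ·)`; as the support of `f` meets only finitely many
cylinders `[a]`, this bounds `K(f, ·)` from above, and (with `G(1_[x₀], x) ≥ 1`) shows that
`G(1_[o], ·)` never vanishes.
-/

section Shift

variable {Adj : S → S → Prop}

lemma shiftMap_iterate_apply (x : MShift Adj) (k i : ℕ) :
    ((shiftMap Adj)^[k] x).1 i = x.1 (i + k) := by
  induction k generalizing x with
  | zero => rfl
  | succ k ih => rw [Function.iterate_succ_apply, ih]; rfl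

/-- The orbit that follows `x` up to time `n` and then continues as `y`. -/
def splice (x : MShift Adj) (n : ℕ) (y : MShift Adj) (h : y.1 0 = x.1 n) : MShift Adj :=
  ⟨fun i => if i < n then x.1 i else y.1 (i - n), fun i => by
    rcases lt_trichotomy (i + 1) n with hi | hi | hi
    · simpa [hi, show i < n by omega] using x.2 i
    · simpa [show i < n by omega, show i + 1 - n = 0 by omega, h, ← hi] using x.2 i
    · simpa [show ¬i < n by omega, show ¬i + 1 < n by omega, show i + 1 - n = i - n + 1 by omega]
        using y.2 (i - n)⟩

lemma splice_apply_of_le (x : MShift Adj) {n : ℕ} (y : MShift Adj) (h : y.1 0 = x.1 n)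
    {i : ℕ} (hi : i ≤ n) : (splice x n y h).1 i = x.1 i := by
  rcases hi.lt_or_eq with hi | rfl
  · simp [splice, hi]
  · simp [splice, h]

lemma shiftMap_iterate_splice (x : MShift Adj) (n : ℕ) (y : MShift Adj) (h : y.1 0 = x.1 n) :
    (shiftMap Adj)^[n] (splice x n y h) = y :=
  Subtype.ext <| funext fun i => by simp [shiftMap_iterate_apply, splice]

lemma exists_extend_to_state (htrans : TransitiveShift Adj) (u : MShift Adj) (m : ℕ) (b : S) :
    ∃ n, ∃ X : MShift Adj, m ≤ n ∧ (∀ i ≤ m, X.1 i = u.1 i) ∧ X.1 n = b := by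
  obtain ⟨k, y, hy, hyb⟩ := htrans (u.1 m) b
  refine ⟨k + m, splice u m y hy, by omega, fun i hi => splice_apply_of_le u y hy hi, ?_⟩
  rw [← hyb, shiftMap_iterate_apply, ← shiftMap_iterate_apply _ m, shiftMap_iterate_splice]
  simp

lemma exists_cylinder_subset_of_mem_nhds [TopologicalSpace S] [DiscreteTopology S]
    {u : MShift Adj} {U : Set (MShift Adj)} (hU : U ∈ 𝓝 u) :
    ∃ m, ∀ z : MShift Adj, (∀ i ≤ m, z.1 i = u.1 i) → z ∈ U := by
  rw [nhds_induced] at hU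
  obtain ⟨V, hV, hVU⟩ := hU
  obtain ⟨_, ⟨x, m, rfl⟩, hux, hxV⟩ :=
    (PiNat.isTopologicalBasis_cylinders _).mem_nhds_iff.mp hV
  refine ⟨m, fun z hz => hVU (hxV ?_)⟩
  rw [← PiNat.mem_cylinder_iff_eq.mp hux]
  exact fun i hi => hz i hi.le

end Shift

section Ruelle

variable (Adj : S → S → Prop) (φ : MShift Adj → ℝ)

noncomputable def ruelleLinear : Module.End ℝ≥0∞ (MShift Adj → ℝ≥0∞) where
  toFun := Ruelle Adj φ
  map_add' g h := funext fun x => by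
    simp only [Ruelle, Pi.add_apply, mul_add, ENNReal.tsum_add]
  map_smul' c g := funext fun x => by
    simp only [Ruelle, Pi.smul_apply, smul_eq_mul, RingHom.id_apply, ← ENNReal.tsum_mul_left,
      mul_left_comm]

lemma ruelle_iterate_eq_pow (n : ℕ) : (Ruelle Adj φ)^[n] = ⇑(ruelleLinear Adj φ ^ n) :=
  (Module.End.coe_pow (ruelleLinear Adj φ) n).symm

lemma ruelle_monotone : Monotone (Ruelle Adj φ) := fun _ _ hgh _ =>
  ENNReal.tsum_le_tsum fun y => mul_le_mul_right (hgh y.1) _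

lemma exp_birkhoffSum_mul_le_ruelle_iterate (g : MShift Adj → ℝ≥0∞) (n : ℕ)
    (z : MShift Adj) :
    ENNReal.ofReal (Real.exp (birkhoffSum (shiftMap Adj) φ n z)) * g z
      ≤ ((Ruelle Adj φ)^[n] g) ((shiftMap Adj)^[n] z) := by
  induction n generalizing g z with
  | zero => simp
  | succ n ih =>
    have hstep : ENNReal.ofReal (Real.exp (φ z)) * g z ≤ Ruelle Adj φ g (shiftMap Adj z) :=
      ENNReal.le_tsum (⟨z, rfl⟩ : {y // shiftMap Adj y = shiftMap Adj z})
    calc ENNReal.ofReal (Real.exp (birkhoffSum (shiftMap Adj) φ (n + 1) z)) * g z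
        = ENNReal.ofReal (Real.exp (birkhoffSum (shiftMap Adj) φ n (shiftMap Adj z)))
            * (ENNReal.ofReal (Real.exp (φ z)) * g z) := by
          rw [birkhoffSum_succ', Real.exp_add, ENNReal.ofReal_mul (Real.exp_nonneg _)]
          ring
      _ ≤ ENNReal.ofReal (Real.exp (birkhoffSum (shiftMap Adj) φ n (shiftMap Adj z)))
            * Ruelle Adj φ g (shiftMap Adj z) := by gcongr
      _ ≤ _ := ih _ _

end Ruelle

section Green

variable (Adj : S → S → Prop) (φ : MShift Adj → ℝ) (lam : ℝ)

noncomputable def greenLinear : Module.End ℝ≥0∞ (MShift Adj → ℝ≥0∞) where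
  toFun := Green Adj φ lam
  map_add' g h := funext fun x => by
    simp only [Green, ruelle_iterate_eq_pow, map_add, Pi.add_apply, mul_add, ENNReal.tsum_add]
  map_smul' c g := funext fun x => by
    simp only [Green, ruelle_iterate_eq_pow, map_smul, Pi.smul_apply, smul_eq_mul,
      RingHom.id_apply, ← ENNReal.tsum_mul_left, mul_left_comm]

lemma green_sum {ι : Type*} (F : Finset ι) (g : ι → MShift Adj → ℝ≥0∞) :
    Green Adj φ lam (∑ a ∈ F, g a) = ∑ a ∈ F, Green Adj φ lam (g a) :=
  map_sum (greenLinear Adj φ lam) g F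

lemma green_smul (c : ℝ≥0∞) (g : MShift Adj → ℝ≥0∞) :
    Green Adj φ lam (c • g) = c • Green Adj φ lam g :=
  (greenLinear Adj φ lam).map_smul c g

lemma green_monotone : Monotone (Green Adj φ lam) := fun _ _ hgh x =>
  ENNReal.tsum_le_tsum fun n => mul_le_mul_right ((ruelle_monotone Adj φ).iterate n hgh x) _

lemma le_green (g : MShift Adj → ℝ≥0∞) (x : MShift Adj) : g x ≤ Green Adj φ lam g x := by
  calc g x = ENNReal.ofReal ((lam ^ 0)⁻¹) * ((Ruelle Adj φ)^[0] g) x := by simp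
    _ ≤ Green Adj φ lam g x := ENNReal.le_tsum 0

variable {lam}

lemma mul_green_ruelle_iterate_le (hlam : 0 < lam) (n : ℕ) (g : MShift Adj → ℝ≥0∞)
    (x : MShift Adj) :
    ENNReal.ofReal ((lam ^ n)⁻¹) * Green Adj φ lam ((Ruelle Adj φ)^[n] g) x
      ≤ Green Adj φ lam g x := by
  calc ENNReal.ofReal ((lam ^ n)⁻¹) * Green Adj φ lam ((Ruelle Adj φ)^[n] g) x
      = ∑' k, ENNReal.ofReal ((lam ^ (k + n))⁻¹) * ((Ruelle Adj φ)^[k + n] g) x := by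
        rw [Green, ← ENNReal.tsum_mul_left]
        congr 1 with k
        rw [pow_add, mul_inv, ENNReal.ofReal_mul (by positivity), Function.iterate_add_apply]
        ring
    _ ≤ Green Adj φ lam g x := ENNReal.tsum_comp_le_tsum_of_injective (add_left_injective n) _

lemma mul_green_le_of_le_ruelle_iterate (hlam : 0 < lam) {n : ℕ} {δ : ℝ≥0∞}
    {g h : MShift Adj → ℝ≥0∞} (hδ : δ • h ≤ (Ruelle Adj φ)^[n] g) (x : MShift Adj) :
    ENNReal.ofReal ((lam ^ n)⁻¹) * δ * Green Adj φ lam h x ≤ Green Adj φ lam g x :=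
  calc ENNReal.ofReal ((lam ^ n)⁻¹) * δ * Green Adj φ lam h x
      = ENNReal.ofReal ((lam ^ n)⁻¹) * Green Adj φ lam (δ • h) x := by
        rw [green_smul, Pi.smul_apply, smul_eq_mul, mul_assoc]
    _ ≤ ENNReal.ofReal ((lam ^ n)⁻¹) * Green Adj φ lam ((Ruelle Adj φ)^[n] g) x := by
        gcongr
        exact green_monotone Adj φ lam hδ x
    _ ≤ Green Adj φ lam g x := mul_green_ruelle_iterate_le Adj φ hlam n g x

end Green

section Harnack

variable {Adj : S → S → Prop} {φ : MShift Adj → ℝ}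

lemma cylInd_apply_of_eq {a : S} {z : MShift Adj} (h : z.1 0 = a) : cylInd Adj a z = 1 :=
  Set.indicator_of_mem (show z ∈ cylA Adj a from h) 1

lemma cylInd_apply_of_ne {a : S} {z : MShift Adj} (h : z.1 0 ≠ a) : cylInd Adj a z = 0 :=
  Set.indicator_of_notMem h 1

lemma birkhoffSum_sub_le_sum_var (hbdd : ∀ m, BddAbove (varSet Adj φ m)) {n : ℕ}
    {X z : MShift Adj} (hz : ∀ i ≤ n, z.1 i = X.1 i) :
    birkhoffSum (shiftMap Adj) φ n X - birkhoffSum (shiftMap Adj) φ n z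
      ≤ ∑ i ∈ Finset.range n, Var Adj φ (n + 1 - i) := by
  rw [birkhoffSum, birkhoffSum, ← Finset.sum_sub_distrib]
  refine Finset.sum_le_sum fun i hi => (le_abs_self _).trans (le_csSup (hbdd _) ⟨_, _, ?_, rfl⟩)
  intro j hj
  rw [shiftMap_iterate_apply, shiftMap_iterate_apply, hz]
  simp only [Finset.mem_range] at hi
  omega

lemma exists_smul_cylInd_le_ruelle_iterate (hbdd : ∀ m, BddAbove (varSet Adj φ m))
    (X : MShift Adj) (n : ℕ) {g : MShift Adj → ℝ≥0∞} {ε : ℝ≥0∞}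
    (hg : ∀ z : MShift Adj, (∀ i ≤ n, z.1 i = X.1 i) → ε ≤ g z) :
    ∃ δ : ℝ, 0 < δ ∧
      (ENNReal.ofReal δ * ε) • cylInd Adj (X.1 n) ≤ (Ruelle Adj φ)^[n] g := by
  refine ⟨Real.exp (birkhoffSum (shiftMap Adj) φ n X
    - ∑ i ∈ Finset.range n, Var Adj φ (n + 1 - i)), Real.exp_pos _, fun y => ?_⟩
  by_cases hy : y.1 0 = X.1 n
  · set z := splice X n y hy
    have hz : ∀ i ≤ n, z.1 i = X.1 i := fun i hi => splice_apply_of_le X y hy hi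
    calc ((ENNReal.ofReal _ * ε) • cylInd Adj (X.1 n)) y
        = ENNReal.ofReal (Real.exp (birkhoffSum (shiftMap Adj) φ n X
            - ∑ i ∈ Finset.range n, Var Adj φ (n + 1 - i))) * ε := by
          simp [cylInd_apply_of_eq hy]
      _ ≤ ENNReal.ofReal (Real.exp (birkhoffSum (shiftMap Adj) φ n z)) * g z := by
          gcongr
          · linarith [birkhoffSum_sub_le_sum_var hbdd hz]
          · exact hg z hz
      _ ≤ ((Ruelle Adj φ)^[n] g) y := by
          simpa [z, shiftMap_iterate_splice] using
            exp_birkhoffSum_mul_le_ruelle_iterate Adj φ g n z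
  · simp [cylInd_apply_of_ne hy]

lemma exists_mul_green_cylInd_le (htrans : TransitiveShift Adj)
    (hbdd : ∀ m, BddAbove (varSet Adj φ m)) {lam : ℝ} (hlam : 0 < lam)
    {u : MShift Adj} {m : ℕ} {g : MShift Adj → ℝ≥0∞} {ε : ℝ} (hε : 0 < ε)
    (hg : ∀ z : MShift Adj, (∀ i ≤ m, z.1 i = u.1 i) → ENNReal.ofReal ε ≤ g z) (b : S) :
    ∃ c : ℝ, 0 < c ∧
      ∀ x, ENNReal.ofReal c * Green Adj φ lam (cylInd Adj b) x ≤ Green Adj φ lam g x := by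
  obtain ⟨n, X, hmn, hXu, hXb⟩ := exists_extend_to_state htrans u m b
  obtain ⟨δ, hδ, hL⟩ := exists_smul_cylInd_le_ruelle_iterate hbdd X n
    (g := g) fun z hz => hg z fun i hi => (hz i (hi.trans hmn)).trans (hXu i hi)
  refine ⟨(lam ^ n)⁻¹ * (δ * ε), by positivity, fun x => ?_⟩
  rw [hXb] at hL
  calc ENNReal.ofReal ((lam ^ n)⁻¹ * (δ * ε)) * Green Adj φ lam (cylInd Adj b) x
      = ENNReal.ofReal ((lam ^ n)⁻¹) * (ENNReal.ofReal δ * ENNReal.ofReal ε)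
          * Green Adj φ lam (cylInd Adj b) x := by
        rw [ENNReal.ofReal_mul (by positivity), ENNReal.ofReal_mul hδ.le]
    _ ≤ Green Adj φ lam g x := mul_green_le_of_le_ruelle_iterate Adj φ hlam hL x

end Harnack

section MartinKernel

variable {Adj : S → S → Prop} {φ : MShift Adj → ℝ} {lam : ℝ}

lemma exists_green_cylInd_le_mul_green_cylInd (htrans : TransitiveShift Adj)
    (hbdd : ∀ m, BddAbove (varSet Adj φ m)) (hlam : 0 < lam) (a o : S) :
    ∃ C : ℝ, 0 ≤ C ∧
      ∀ x, Green Adj φ lam (cylInd Adj a) x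
        ≤ ENNReal.ofReal C * Green Adj φ lam (cylInd Adj o) x := by
  obtain ⟨-, u, hu, -⟩ := htrans o o
  obtain ⟨c, hc, hcG⟩ := exists_mul_green_cylInd_le htrans hbdd hlam (m := 0) (u := u)
    (g := cylInd Adj o) one_pos
    (fun z hz => by simp [cylInd_apply_of_eq ((hz 0 le_rfl).trans hu)]) a
  refine ⟨c⁻¹, inv_nonneg.mpr hc.le, fun x => ?_⟩
  rw [ENNReal.ofReal_inv_of_pos hc, ← ENNReal.mul_le_iff_le_inv (ENNReal.ofReal_pos.mpr hc).ne'
    ENNReal.ofReal_ne_top]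
  exact hcG x

lemma green_cylInd_ne_zero (htrans : TransitiveShift Adj)
    (hbdd : ∀ m, BddAbove (varSet Adj φ m)) (hlam : 0 < lam) (o : S) (x : MShift Adj) :
    Green Adj φ lam (cylInd Adj o) x ≠ 0 := by
  obtain ⟨C, -, hC⟩ := exists_green_cylInd_le_mul_green_cylInd htrans hbdd hlam (x.1 0) o
  intro h0
  simpa [cylInd_apply_of_eq rfl, h0] using (le_green Adj φ lam _ x).trans (hC x)

variable [TopologicalSpace S] [DiscreteTopology S]

lemma exists_ofR_le_smul_sum_cylInd {f : MShift Adj → ℝ} (hf : Continuous f)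
    (hsupp : HasCompactSupport f) :
    ∃ M : ℝ, 0 ≤ M ∧
      ∃ F : Finset S, ofR f ≤ ENNReal.ofReal M • ∑ a ∈ F, cylInd Adj a := by
  obtain ⟨M, hM⟩ := hf.bounded_above_of_compact_support hsupp
  have hF : ((fun z : MShift Adj => z.1 0) '' tsupport f).Finite :=
    (hsupp.image ((continuous_apply 0).comp continuous_subtype_val)).finite_of_discrete
  refine ⟨max M 0, le_max_right _ _, hF.toFinset, fun z => ?_⟩
  by_cases hz : f z = 0
  · simp [ofR, hz]
  have hone : (1 : ℝ≥0∞) ≤ ∑ a ∈ hF.toFinset, cylInd Adj a z := by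
    rw [← cylInd_apply_of_eq (a := z.1 0) rfl]
    exact Finset.single_le_sum (f := fun a => cylInd Adj a z) (fun _ _ => zero_le)
      (hF.mem_toFinset.mpr ⟨z, subset_tsupport f hz, rfl⟩)
  calc ofR f z ≤ ENNReal.ofReal (max M 0) * 1 := by
        rw [mul_one]
        exact ENNReal.ofReal_le_ofReal ((le_abs_self (f z)).trans ((hM z).trans (le_max_left M 0)))
    _ ≤ (ENNReal.ofReal (max M 0) • ∑ a ∈ hF.toFinset, cylInd Adj a) z := by
        simpa [Finset.sum_apply] using mul_le_mul_right hone _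

lemma exists_green_ofR_le_mul_green_cylInd (htrans : TransitiveShift Adj)
    (hbdd : ∀ m, BddAbove (varSet Adj φ m)) (hlam : 0 < lam) {f : MShift Adj → ℝ}
    (hf : Continuous f) (hsupp : HasCompactSupport f) (o : S) :
    ∃ C : ℝ, ∀ x,
      Green Adj φ lam (ofR f) x ≤ ENNReal.ofReal C * Green Adj φ lam (cylInd Adj o) x := by
  choose C hC0 hC using fun a => exists_green_cylInd_le_mul_green_cylInd htrans hbdd hlam a o
  obtain ⟨M, hM, F, hfM⟩ := exists_ofR_le_smul_sum_cylInd hf hsupp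
  refine ⟨M * ∑ a ∈ F, C a, fun x => ?_⟩
  calc Green Adj φ lam (ofR f) x
      ≤ Green Adj φ lam (ENNReal.ofReal M • ∑ a ∈ F, cylInd Adj a) x :=
        green_monotone Adj φ lam hfM x
    _ = ENNReal.ofReal M * ∑ a ∈ F, Green Adj φ lam (cylInd Adj a) x := by
        rw [green_smul, green_sum]
        simp [Finset.sum_apply]
    _ ≤ ENNReal.ofReal M
          * ∑ a ∈ F, ENNReal.ofReal (C a) * Green Adj φ lam (cylInd Adj o) x := by
        gcongr with a
        exact hC a x
    _ = ENNReal.ofReal (M * ∑ a ∈ F, C a) * Green Adj φ lam (cylInd Adj o) x := by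
        rw [← Finset.sum_mul, ← ENNReal.ofReal_sum_of_nonneg fun a _ => hC0 a,
          ENNReal.ofReal_mul hM, mul_assoc]

lemma exists_mul_green_cylInd_le_green_ofR (htrans : TransitiveShift Adj)
    (hbdd : ∀ m, BddAbove (varSet Adj φ m)) (hlam : 0 < lam) {f : MShift Adj → ℝ}
    (hf : Continuous f) {u : MShift Adj} (hu : 0 < f u) (b : S) :
    ∃ c : ℝ, 0 < c ∧
      ∀ x, ENNReal.ofReal c * Green Adj φ lam (cylInd Adj b) x
        ≤ Green Adj φ lam (ofR f) x := by
  obtain ⟨m, hm⟩ := exists_cylinder_subset_of_mem_nhds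
    (hf.continuousAt.preimage_mem_nhds (Ioi_mem_nhds (half_lt_self hu)))
  exact exists_mul_green_cylInd_le htrans hbdd hlam (half_pos hu)
    (fun z hz => ENNReal.ofReal_le_ofReal (hm z hz).le) b

end MartinKernel

theorem martin_kernel_bounds_general [TopologicalSpace S] [DiscreteTopology S]
    (Adj : S → S → Prop) (htrans : TransitiveShift Adj)
    (φ : MShift Adj → ℝ) (hvar : SummableVar Adj φ) (lam : ℝ) (hlam : 0 < lam)
    (htransient : Transient Adj φ lam) (o : S) :
    ∀ f : MShift Adj → ℝ, Continuous f → HasCompactSupport f → 0 ≤ f → f ≠ 0 →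
      ∃ c C : ℝ, 0 < c ∧ c ≤ C ∧
        ∀ x : MShift Adj,
          ENNReal.ofReal c ≤ Green Adj φ lam (ofR f) x / Green Adj φ lam (cylInd Adj o) x ∧
          Green Adj φ lam (ofR f) x / Green Adj φ lam (cylInd Adj o) x ≤ ENNReal.ofReal C := by
  intro f hf hsupp hf0 hfne
  obtain ⟨u, hu⟩ := Function.ne_iff.mp hfne
  obtain ⟨c, hc, hlower⟩ :=
    exists_mul_green_cylInd_le_green_ofR htrans hvar.1 hlam hf ((hf0 u).lt_of_ne' hu) o
  obtain ⟨C, hupper⟩ := exists_green_ofR_le_mul_green_cylInd htrans hvar.1 hlam hf hsupp o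
  refine ⟨c, max c C, hc, le_max_left c C, fun x => ⟨?_, ?_⟩⟩
  all_goals have h0 := green_cylInd_ne_zero htrans hvar.1 hlam o x
  · exact (ENNReal.le_div_iff_mul_le (.inl h0) (.inl (htransient o x))).mpr (hlower x)
  · refine (ENNReal.div_le_iff_le_mul (.inl h0) (.inl (htransient o x))).mpr ?_
    exact (hupper x).trans (by gcongr; exact le_max_right c C)

/-- Uniform bounds for the Martin kernel `K(f, x|λ) = G(f, x|λ) / G(1_[o], x|λ)`:
for every non-zero `f ∈ C_c⁺(X⁺)` there are constants `0 < c_f ≤ C_f` with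
`c_f ≤ K(f, x|λ) ≤ C_f` for all `x`. -/
theorem martin_kernel_bounds [Countable S] [TopologicalSpace S] [DiscreteTopology S]
    (Adj : S → S → Prop) (htrans : TransitiveShift Adj) (hloc : LocFin Adj)
    (φ : MShift Adj → ℝ) (hvar : SummableVar Adj φ) (lam : ℝ) (hlam : 0 < lam)
    (htransient : Transient Adj φ lam) (o : S) :
    ∀ f : MShift Adj → ℝ, Continuous f → HasCompactSupport f → 0 ≤ f → f ≠ 0 →
      ∃ c C : ℝ, 0 < c ∧ c ≤ C ∧
        ∀ x : MShift Adj,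
          ENNReal.ofReal c ≤ Green Adj φ lam (ofR f) x / Green Adj φ lam (cylInd Adj o) x ∧
          Green Adj φ lam (ofR f) x / Green Adj φ lam (cylInd Adj o) x ≤ ENNReal.ofReal C :=
  martin_kernel_bounds_general Adj htrans φ hvar lam hlam htransient o
end

section
/- Let (X⁺, T) be a transitive locally compact one-sided countable Markov shift, φ a λ-transient potential with summable variations, and μ a λ-conformal Radon measure (L_φ*μ = λμ). Then for every compact set F ⊆ X⁺, the set F_∞ = {x ∈ X⁺ : Tⁿx ∈ F for infinitely many n ≥ 0} has μ-measure zero. -/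
open MeasureTheory ENNReal Filter Topology

variable {S : Type*}

/-- The set of points whose orbit visits `F` infinitely often. -/
def visitsInfinitelyOften (Adj : S → S → Prop) (F : Set (MShift Adj)) : Set (MShift Adj) :=
  {x | ∀ N : ℕ, ∃ n ≥ N, (shiftMap Adj)^[n] x ∈ F}

/-! Iterating conformality turns `μ([b] ∩ T⁻ⁿ[a])` into `λ⁻ⁿ ∫_{[a]} L_φⁿ 1_{[b]} dμ`, so the sum
over `n` is the integral of the Green function `G(1_{[b]}, · | λ)` over `[a]`. Summable variations
give bounded distortion: on `[a]` this Green function is at most a constant times its (finite)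
value at a single point, and `[a]` is compact, hence of finite measure. Borel–Cantelli then shows
that almost no point of `[b]` visits `[a]` infinitely often, and a compact set meets only finitely
many cylinders. -/

open Set Function

def MShift.cons {Adj : S → S → Prop} (c : S) (x : MShift Adj) (h : Adj c (x.1 0)) :
    MShift Adj :=
  ⟨fun i => Nat.casesOn i c x.1, fun i => by cases i <;> simp [h, x.2]⟩

section Ruelle

variable {Adj : S → S → Prop}

@[simp]
lemma shiftMap_cons (c : S) (x : MShift Adj) (h : Adj c (x.1 0)) :
    shiftMap Adj (x.cons c h) = x := rfl

def shiftMapFiberEquiv (x : MShift Adj) :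
    {y : MShift Adj // shiftMap Adj y = x} ≃ {c : S // Adj c (x.1 0)} where
  toFun y := ⟨y.1.1 0, by simpa [← y.2, shiftMap] using y.1.2 0⟩
  invFun c := ⟨x.cons c.1 c.2, shiftMap_cons _ _ _⟩
  left_inv y := by
    obtain ⟨y, rfl⟩ := y
    ext i
    cases i <;> rfl
  right_inv c := rfl

-- Summing over all symbols, not over the fibre of `shiftMap`, makes measurability in `x` visible.
open Classical in
noncomputable def ruelleTerm (Adj : S → S → Prop) (φ : MShift Adj → ℝ) (f : MShift Adj → ℝ≥0∞)
    (c : S) (x : MShift Adj) : ℝ≥0∞ :=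
  if h : Adj c (x.1 0) then ENNReal.ofReal (Real.exp (φ (x.cons c h))) * f (x.cons c h) else 0

lemma ruelle_eq_tsum_ruelleTerm (φ : MShift Adj → ℝ) (f : MShift Adj → ℝ≥0∞) (x : MShift Adj) :
    Ruelle Adj φ f x = ∑' c : S, ruelleTerm Adj φ f c x := by
  have hsupp : support (ruelleTerm Adj φ f · x) ⊆ {c | Adj c (x.1 0)} := fun c hc => by
    by_contra h
    exact hc (dif_neg h)
  rw [Ruelle, ← (shiftMapFiberEquiv x).symm.tsum_eq, ← tsum_subtype_eq_of_support_subset hsupp]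
  exact tsum_congr fun c => by rw [ruelleTerm, dif_pos c.2]; rfl

variable [MeasurableSpace S]

lemma measurable_mshift_apply (i : ℕ) : Measurable fun x : MShift Adj => x.1 i :=
  (measurable_pi_apply i).comp measurable_subtype_coe

lemma measurable_shiftMap : Measurable (shiftMap Adj) :=
  (measurable_pi_lambda _ fun i => measurable_mshift_apply (i + 1)).subtype_mk

lemma measurable_cons (c : S) :
    Measurable fun x : {x : MShift Adj // Adj c (x.1 0)} => x.1.cons c x.2 := by
  refine (measurable_pi_lambda _ fun i => ?_).subtype_mk
  cases i with
  | zero => exact measurable_const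
  | succ i => exact (measurable_mshift_apply i).comp measurable_subtype_coe

variable [Countable S] [MeasurableSingletonClass S]

lemma measurableSet_mshift_apply_zero (s : Set S) : MeasurableSet {x : MShift Adj | x.1 0 ∈ s} :=
  measurable_mshift_apply 0 (.of_discrete)

lemma measurable_ruelle {φ : MShift Adj → ℝ} {f : MShift Adj → ℝ≥0∞} (hφ : Measurable φ)
    (hf : Measurable f) : Measurable (Ruelle Adj φ f) := by
  simp_rw [funext (ruelle_eq_tsum_ruelleTerm φ f)]
  refine Measurable.tsum fun c => ?_
  classical
  exact Measurable.dite ((ENNReal.measurable_ofReal.comp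
    (Real.measurable_exp.comp (hφ.comp (measurable_cons c)))).mul (hf.comp (measurable_cons c)))
    measurable_const (measurableSet_mshift_apply_zero {s | Adj c s})

lemma measurable_ruelle_iterate {φ : MShift Adj → ℝ} {f : MShift Adj → ℝ≥0∞}
    (hφ : Measurable φ) (hf : Measurable f) (n : ℕ) : Measurable ((Ruelle Adj φ)^[n] f) := by
  induction n with
  | zero => exact hf
  | succ n ih => exact iterate_succ_apply' (Ruelle Adj φ) n f ▸ measurable_ruelle hφ ih

end Ruelle

section Variation

variable {Adj : S → S → Prop} {φ : MShift Adj → ℝ}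

lemma abs_sub_le_var (hvar : SummableVar Adj φ) {m : ℕ} {x y : MShift Adj}
    (hxy : ∀ i < m, x.1 i = y.1 i) : |φ x - φ y| ≤ Var Adj φ m :=
  le_csSup (hvar.1 m) ⟨x, y, hxy, rfl⟩

lemma var_nonneg [Nonempty (MShift Adj)] (hvar : SummableVar Adj φ) (m : ℕ) :
    0 ≤ Var Adj φ m :=
  let x : MShift Adj := Classical.arbitrary _
  (abs_nonneg _).trans (abs_sub_le_var hvar (x := x) (y := x) fun _ _ => rfl)

lemma measurable_of_summableVar [MeasurableSpace S] [Countable S] [MeasurableSingletonClass S]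
    (hvar : SummableVar Adj φ) : Measurable φ := by
  refine measurable_of_isOpen fun U hU => ?_
  let cyl (p : Σ m, Fin m → S) : Set (MShift Adj) := {y | ∀ i : Fin p.1, y.1 i = p.2 i}
  have hcyl (p) : MeasurableSet (cyl p) := by
    simp only [cyl, ofPred_forall]
    exact .iInter fun i => measurable_mshift_apply (Adj := Adj) i (measurableSet_singleton (p.2 i))
  suffices φ ⁻¹' U = ⋃ (p) (_ : cyl p ⊆ φ ⁻¹' U), cyl p from
    this ▸ .biUnion (to_countable _) fun p _ => hcyl p
  refine Subset.antisymm (fun x hx => ?_) (iUnion₂_subset fun p hp => hp)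
  obtain ⟨ε, hε, hball⟩ := Metric.isOpen_iff.1 hU (φ x) hx
  obtain ⟨m, hm⟩ := (hvar.2.tendsto_atTop_zero.eventually (gt_mem_nhds hε)).exists
  refine mem_iUnion₂.2 ⟨⟨m, fun i => x.1 i⟩, fun y hy => hball ?_, fun i => rfl⟩
  rw [Metric.mem_ball, Real.dist_eq]
  exact (abs_sub_le_var hvar fun i hi => hy ⟨i, hi⟩).trans_lt hm

end Variation

section Distortion

variable {Adj : S → S → Prop} {φ : MShift Adj → ℝ}

lemma ruelle_le_of_agree (hvar : SummableVar Adj φ) {m : ℕ} {x y : MShift Adj}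
    (hxy : ∀ i < m + 1, x.1 i = y.1 i) {f : MShift Adj → ℝ≥0∞} {K : ℝ≥0∞}
    (hf : ∀ x' y' : MShift Adj, (∀ i < m + 2, x'.1 i = y'.1 i) → f x' ≤ K * f y') :
    Ruelle Adj φ f x ≤ ENNReal.ofReal (Real.exp (Var Adj φ (m + 2))) * K * Ruelle Adj φ f y := by
  rw [ruelle_eq_tsum_ruelleTerm, ruelle_eq_tsum_ruelleTerm, ← ENNReal.tsum_mul_left]
  refine ENNReal.tsum_le_tsum fun c => ?_
  by_cases hc : Adj c (x.1 0)
  · have hc' : Adj c (y.1 0) := hxy 0 m.succ_pos ▸ hc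
    have hcons : ∀ i < m + 2, (x.cons c hc).1 i = (y.cons c hc').1 i := by
      rintro (_ | i) hi
      · rfl
      · exact hxy i (by omega)
    have hexp : ENNReal.ofReal (Real.exp (φ (x.cons c hc))) ≤
        ENNReal.ofReal (Real.exp (Var Adj φ (m + 2))) *
          ENNReal.ofReal (Real.exp (φ (y.cons c hc'))) := by
      rw [← ENNReal.ofReal_mul (Real.exp_nonneg _), ← Real.exp_add]
      gcongr
      linarith [(abs_le.1 (abs_sub_le_var hvar hcons)).2]
    calc ruelleTerm Adj φ f c x
        ≤ _ * (K * f (y.cons c hc')) := by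
          rw [ruelleTerm, dif_pos hc]
          exact mul_le_mul' hexp (hf _ _ hcons)
      _ = _ := by rw [ruelleTerm, dif_pos hc']; ring
  · simp [ruelleTerm, hc]

lemma ruelle_iterate_le_of_agree (hvar : SummableVar Adj φ) {f : MShift Adj → ℝ≥0∞}
    (hf : ∀ x y : MShift Adj, x.1 0 = y.1 0 → f x = f y) (n : ℕ) {m : ℕ} {x y : MShift Adj}
    (hxy : ∀ i < m + 1, x.1 i = y.1 i) :
    (Ruelle Adj φ)^[n] f x ≤
      ENNReal.ofReal (Real.exp (∑ k ∈ Finset.range n, Var Adj φ (k + m + 2))) *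
        (Ruelle Adj φ)^[n] f y := by
  induction n generalizing m x y with
  | zero => simp [hf x y (hxy 0 m.succ_pos)]
  | succ n ih =>
    rw [iterate_succ_apply', Finset.sum_range_succ', add_comm, Real.exp_add,
      ENNReal.ofReal_mul (Real.exp_nonneg _)]
    convert ruelle_le_of_agree hvar hxy fun x' y' => ih (m := m + 1) (x := x') (y := y') using 5
    · rw [zero_add]
    · simp only [add_right_comm _ 1 m, add_assoc]

lemma ruelle_iterate_le_of_apply_zero_eq (hvar : SummableVar Adj φ) {f : MShift Adj → ℝ≥0∞}
    (hf : ∀ x y : MShift Adj, x.1 0 = y.1 0 → f x = f y) (n : ℕ) {x y : MShift Adj}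
    (hxy : x.1 0 = y.1 0) :
    (Ruelle Adj φ)^[n] f x ≤
      ENNReal.ofReal (Real.exp (∑' j, Var Adj φ j)) * (Ruelle Adj φ)^[n] f y := by
  have : Nonempty (MShift Adj) := ⟨x⟩
  refine (ruelle_iterate_le_of_agree hvar hf n (m := 0) (by simpa using hxy)).trans ?_
  gcongr
  refine le_of_eq_of_le ?_ (hvar.2.sum_le_tsum ((Finset.range n).map (addRightEmbedding 2))
    fun j _ => var_nonneg hvar j)
  rw [Finset.sum_map]
  rfl

lemma green_le_of_apply_zero_eq (hvar : SummableVar Adj φ) {f : MShift Adj → ℝ≥0∞}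
    (hf : ∀ x y : MShift Adj, x.1 0 = y.1 0 → f x = f y) (lam : ℝ) {x y : MShift Adj}
    (hxy : x.1 0 = y.1 0) :
    Green Adj φ lam f x ≤ ENNReal.ofReal (Real.exp (∑' j, Var Adj φ j)) * Green Adj φ lam f y := by
  rw [Green, Green, ← ENNReal.tsum_mul_left]
  refine ENNReal.tsum_le_tsum fun n => ?_
  rw [mul_left_comm]
  gcongr
  exact ruelle_iterate_le_of_apply_zero_eq hvar hf n hxy

end Distortion

section Conformal

variable {Adj : S → S → Prop} {φ : MShift Adj → ℝ}

lemma ruelle_mul_comp_shiftMap (f g : MShift Adj → ℝ≥0∞) (x : MShift Adj) :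
    Ruelle Adj φ (fun z => f z * g (shiftMap Adj z)) x = Ruelle Adj φ f x * g x := by
  rw [Ruelle, Ruelle, ← ENNReal.tsum_mul_right]
  exact tsum_congr fun y => by rw [y.2, mul_assoc]

lemma ruelle_iterate_mul_comp_shiftMap_iterate (n : ℕ) (f g : MShift Adj → ℝ≥0∞) :
    (Ruelle Adj φ)^[n] (fun z => f z * g ((shiftMap Adj)^[n] z)) =
      fun x => (Ruelle Adj φ)^[n] f x * g x := by
  induction n generalizing f with
  | zero => rfl
  | succ n ih =>
    simp only [iterate_succ_apply]
    rw [← ih]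
    congr 1
    exact funext (ruelle_mul_comp_shiftMap f fun w => g ((shiftMap Adj)^[n] w))

variable [MeasurableSpace S]

def IsConformal (Adj : S → S → Prop) (φ : MShift Adj → ℝ) (lam : ℝ) (μ : Measure (MShift Adj)) :
    Prop :=
  ∀ f : MShift Adj → ℝ≥0∞, Measurable f →
    ∫⁻ x, Ruelle Adj φ f x ∂μ = ENNReal.ofReal lam * ∫⁻ x, f x ∂μ

variable [Countable S] [MeasurableSingletonClass S] {lam : ℝ} {μ : Measure (MShift Adj)}

lemma IsConformal.lintegral_ruelle_iterate (hconf : IsConformal Adj φ lam μ) (hφ : Measurable φ)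
    (n : ℕ) {f : MShift Adj → ℝ≥0∞} (hf : Measurable f) :
    ∫⁻ x, (Ruelle Adj φ)^[n] f x ∂μ = ENNReal.ofReal lam ^ n * ∫⁻ x, f x ∂μ := by
  induction n generalizing f with
  | zero => simp
  | succ n ih =>
    simp only [iterate_succ_apply]
    rw [ih (measurable_ruelle hφ hf), hconf f hf, pow_succ, mul_assoc]

lemma IsConformal.measure_inter_preimage_iterate (hconf : IsConformal Adj φ lam μ)
    (hφ : Measurable φ) (hlam : 0 < lam) {A B : Set (MShift Adj)} (hA : MeasurableSet A)
    (hB : MeasurableSet B) (n : ℕ) :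
    μ (B ∩ (shiftMap Adj)^[n] ⁻¹' A) = ENNReal.ofReal ((lam ^ n)⁻¹) *
      ∫⁻ x, (Ruelle Adj φ)^[n] (B.indicator 1) x * A.indicator 1 x ∂μ := by
  have hT := (measurable_shiftMap (Adj := Adj)).iterate n
  have hind : (B ∩ (shiftMap Adj)^[n] ⁻¹' A).indicator 1 =
      fun z => B.indicator 1 z * A.indicator (1 : MShift Adj → ℝ≥0∞) ((shiftMap Adj)^[n] z) := by
    rw [inter_indicator_one]
    rfl
  have hconf_n := hconf.lintegral_ruelle_iterate hφ n
    (f := (B ∩ (shiftMap Adj)^[n] ⁻¹' A).indicator 1) (measurable_one.indicator (hB.inter (hT hA)))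
  rw [hind, ruelle_iterate_mul_comp_shiftMap_iterate, ← hind,
    lintegral_indicator_one (hB.inter (hT hA))] at hconf_n
  rw [hconf_n, ← mul_assoc, ENNReal.ofReal_inv_of_pos (pow_pos hlam n), ENNReal.ofReal_pow hlam.le,
    ENNReal.inv_mul_cancel (pow_ne_zero n (ENNReal.ofReal_pos.2 hlam).ne')
      (pow_ne_top ENNReal.ofReal_ne_top), one_mul]

end Conformal

section Cylinders

variable {Adj : S → S → Prop}

lemma isCompact_cylA [TopologicalSpace S] [DiscreteTopology S] (hloc : LocFin Adj) (a : S) :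
    IsCompact (cylA Adj a) := by
  let reach (n : ℕ) : Set S := (fun s => ⋃ c ∈ s, {d | Adj c d})^[n] {a}
  have reach_succ (n : ℕ) : reach (n + 1) = ⋃ c ∈ reach n, {d | Adj c d} :=
    iterate_succ_apply' _ _ _
  have hfin (n : ℕ) : (reach n).Finite := by
    induction n with
    | zero => exact finite_singleton a
    | succ n ih => exact reach_succ n ▸ ih.biUnion fun c _ => hloc c
  have hreach (x : MShift Adj) (hx : x ∈ cylA Adj a) (n : ℕ) : x.1 n ∈ reach n := by
    induction n with
    | zero => exact hx
    | succ n ih => exact reach_succ n ▸ mem_biUnion ih (x.2 n)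
  have hclosed : IsClosed {u : ℕ → S | ∀ i, Adj (u i) (u (i + 1))} := by
    simp only [ofPred_forall]
    exact isClosed_iInter fun i => IsClosed.preimage (f := fun u : ℕ → S => (u i, u (i + 1)))
      (by fun_prop) (isClosed_discrete {p : S × S | Adj p.1 p.2})
  have hK : IsCompact ({u : ℕ → S | u 0 = a} ∩ univ.pi reach) :=
    (isCompact_univ_pi fun n => (hfin n).isCompact).inter_left (isClosed_eq (continuous_apply 0)
      continuous_const)
  have hcyl : cylA Adj a = Subtype.val ⁻¹' ({u : ℕ → S | u 0 = a} ∩ univ.pi reach) :=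
    Subset.antisymm (fun x hx => ⟨hx, mem_univ_pi.2 (hreach x hx)⟩) fun x hx => hx.1
  rw [hcyl]
  exact hclosed.isClosedEmbedding_subtypeVal.isCompact_preimage hK

lemma indicator_cylA_congr {a : S} {x y : MShift Adj} (h : x.1 0 = y.1 0) :
    (cylA Adj a).indicator (1 : MShift Adj → ℝ≥0∞) x = (cylA Adj a).indicator 1 y := by
  by_cases hx : x ∈ cylA Adj a
  · have hy : y ∈ cylA Adj a := h.symm.trans hx
    rw [indicator_of_mem hx, indicator_of_mem hy]
    rfl
  · have hy : y ∉ cylA Adj a := fun hy => hx (h.trans hy)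
    rw [indicator_of_notMem hx, indicator_of_notMem hy]

lemma mem_visitsInfinitelyOften_iff {F : Set (MShift Adj)} {x : MShift Adj} :
    x ∈ visitsInfinitelyOften Adj F ↔ ∃ᶠ n in atTop, (shiftMap Adj)^[n] x ∈ F :=
  frequently_atTop.symm

lemma visitsInfinitelyOften_subset_biUnion_cylA {F : Set (MShift Adj)}
    (hF : ((fun x : MShift Adj => x.1 0) '' F).Finite) :
    visitsInfinitelyOften Adj F ⊆
      ⋃ a ∈ (fun x : MShift Adj => x.1 0) '' F, visitsInfinitelyOften Adj (cylA Adj a) := by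
  intro x hx
  simp only [mem_iUnion₂, exists_prop, mem_visitsInfinitelyOften_iff] at hx ⊢
  refine (hF.frequently_exists (p := fun a n => (shiftMap Adj)^[n] x ∈ cylA Adj a)).1 ?_
  exact hx.mono fun n hn => ⟨_, mem_image_of_mem _ hn, rfl⟩

variable [MeasurableSpace S] [Countable S] [MeasurableSingletonClass S]

lemma measurableSet_cylA (a : S) : MeasurableSet (cylA Adj a) :=
  measurableSet_mshift_apply_zero {a}

end Cylinders

section Dissipation

variable {Adj : S → S → Prop} {φ : MShift Adj → ℝ} [MeasurableSpace S] {μ : Measure (MShift Adj)}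

lemma measure_inter_visitsInfinitelyOften_eq_zero {A B : Set (MShift Adj)}
    (h : ∑' n, μ (B ∩ (shiftMap Adj)^[n] ⁻¹' A) ≠ ∞) : μ (B ∩ visitsInfinitelyOften Adj A) = 0 := by
  refine measure_mono_null ?_ (measure_limsup_atTop_eq_zero h)
  rintro x ⟨hxB, hxA⟩
  exact mem_limsup_iff_frequently_mem.2 ((mem_visitsInfinitelyOften_iff.1 hxA).mono
    fun _ hn => mem_inter hxB hn)

variable [Countable S] [MeasurableSingletonClass S] {lam : ℝ}

lemma IsConformal.tsum_measure_inter_preimage_iterate (hconf : IsConformal Adj φ lam μ)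
    (hφ : Measurable φ) (hlam : 0 < lam) {A B : Set (MShift Adj)} (hA : MeasurableSet A)
    (hB : MeasurableSet B) :
    ∑' n, μ (B ∩ (shiftMap Adj)^[n] ⁻¹' A) =
      ∫⁻ x, Green Adj φ lam (B.indicator 1) x * A.indicator 1 x ∂μ := by
  have hmeas (n : ℕ) :
      Measurable fun x => (Ruelle Adj φ)^[n] (B.indicator 1) x * A.indicator 1 x :=
    (measurable_ruelle_iterate hφ (measurable_one.indicator hB) n).mul
      (measurable_one.indicator hA)
  simp_rw [hconf.measure_inter_preimage_iterate hφ hlam hA hB, Green, ← ENNReal.tsum_mul_right,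
    mul_assoc, ← lintegral_const_mul' _ _ ENNReal.ofReal_ne_top]
  exact (lintegral_tsum fun n => (measurable_const.mul (hmeas n)).aemeasurable).symm

lemma lintegral_green_mul_indicator_cylA_le (hvar : SummableVar Adj φ) {f : MShift Adj → ℝ≥0∞}
    (hf : ∀ x y : MShift Adj, x.1 0 = y.1 0 → f x = f y) (lam : ℝ) {a : S} {x₀ : MShift Adj}
    (hx₀ : x₀ ∈ cylA Adj a) :
    ∫⁻ x, Green Adj φ lam f x * (cylA Adj a).indicator 1 x ∂μ ≤
      ENNReal.ofReal (Real.exp (∑' j, Var Adj φ j)) * Green Adj φ lam f x₀ * μ (cylA Adj a) := by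
  calc ∫⁻ x, Green Adj φ lam f x * (cylA Adj a).indicator 1 x ∂μ
      ≤ ∫⁻ x, ENNReal.ofReal (Real.exp (∑' j, Var Adj φ j)) * Green Adj φ lam f x₀ *
          (cylA Adj a).indicator 1 x ∂μ := by
        refine lintegral_mono fun x => ?_
        by_cases hx : x ∈ cylA Adj a
        · gcongr
          exact green_le_of_apply_zero_eq hvar hf lam (hx.trans hx₀.symm)
        · simp [hx]
    _ = _ := by
        rw [lintegral_const_mul _ (measurable_one.indicator (measurableSet_cylA a)),
          lintegral_indicator_one (measurableSet_cylA a)]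

lemma measure_visitsInfinitelyOften_cylA_eq_zero (hvar : SummableVar Adj φ) (hlam : 0 < lam)
    (htransient : Transient Adj φ lam) (hconf : IsConformal Adj φ lam μ) {a : S}
    (ha : μ (cylA Adj a) ≠ ∞) : μ (visitsInfinitelyOften Adj (cylA Adj a)) = 0 := by
  rcases (cylA Adj a).eq_empty_or_nonempty with hempty | ⟨x₀, hx₀⟩
  · simp [visitsInfinitelyOften, hempty]
  have hcover : visitsInfinitelyOften Adj (cylA Adj a) ⊆
      ⋃ b, cylA Adj b ∩ visitsInfinitelyOften Adj (cylA Adj a) :=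
    fun x hx => mem_iUnion.2 ⟨x.1 0, rfl, hx⟩
  refine measure_mono_null hcover (measure_iUnion_null fun b => ?_)
  refine measure_inter_visitsInfinitelyOften_eq_zero ?_
  rw [hconf.tsum_measure_inter_preimage_iterate (measurable_of_summableVar hvar) hlam
    (measurableSet_cylA a) (measurableSet_cylA b)]
  refine ne_top_of_le_ne_top ?_ (lintegral_green_mul_indicator_cylA_le hvar
    (fun _ _ => indicator_cylA_congr) lam hx₀)
  exact mul_ne_top (mul_ne_top ofReal_ne_top (htransient b x₀)) ha

end Dissipation

theorem conformal_dissipative_on_compacts_general [Countable S] [MeasurableSpace S]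
    [MeasurableSingletonClass S] [TopologicalSpace S] [DiscreteTopology S]
    (Adj : S → S → Prop) (hloc : LocFin Adj)
    (φ : MShift Adj → ℝ) (hvar : SummableVar Adj φ) (lam : ℝ) (hlam : 0 < lam)
    (htransient : Transient Adj φ lam)
    (μ : Measure (MShift Adj))
    (hRadon : ∀ K : Set (MShift Adj), IsCompact K → μ K ≠ ⊤)
    (hconf : ∀ f : MShift Adj → ℝ≥0∞, Measurable f →
      ∫⁻ x, Ruelle Adj φ f x ∂μ = ENNReal.ofReal lam * ∫⁻ x, f x ∂μ)
    (F : Set (MShift Adj)) (hF : IsCompact F) :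
    μ (visitsInfinitelyOften Adj F) = 0 := by
  have hfirst : ((fun x : MShift Adj => x.1 0) '' F).Finite :=
    (hF.image ((continuous_apply 0).comp continuous_subtype_val)).finite_of_discrete
  refine measure_mono_null (visitsInfinitelyOften_subset_biUnion_cylA hfirst)
    ((measure_biUnion_null_iff hfirst.countable).2 fun a _ => ?_)
  exact measure_visitsInfinitelyOften_cylA_eq_zero hvar hlam htransient hconf
    (hRadon _ (isCompact_cylA hloc a))

/-- For a `λ`-transient potential, every `λ`-conformal Radon measure gives zero mass to the
set of points returning infinitely often to a fixed compact set `F`. -/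
theorem conformal_dissipative_on_compacts [Countable S] [MeasurableSpace S]
    [MeasurableSingletonClass S] [TopologicalSpace S] [DiscreteTopology S]
    (Adj : S → S → Prop) (htrans : TransitiveShift Adj) (hloc : LocFin Adj)
    (φ : MShift Adj → ℝ) (hvar : SummableVar Adj φ) (lam : ℝ) (hlam : 0 < lam)
    (htransient : Transient Adj φ lam)
    (μ : Measure (MShift Adj))
    (hRadon : ∀ K : Set (MShift Adj), IsCompact K → μ K ≠ ⊤)
    (hconf : ∀ f : MShift Adj → ℝ≥0∞, Measurable f →
      ∫⁻ x, Ruelle Adj φ f x ∂μ = ENNReal.ofReal lam * ∫⁻ x, f x ∂μ)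
    (F : Set (MShift Adj)) (hF : IsCompact F) :
    μ (visitsInfinitelyOften Adj F) = 0 :=
  conformal_dissipative_on_compacts_general Adj hloc φ hvar lam hlam htransient μ hRadon hconf F hF
end
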